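/- With φ(z) = ∫₀^∞ e^{-tz} dμ(t), μ finite nonnegative with μ((0,∞))>0, and for any β₁ ≥ 0, β₂ > 0: the ratio (φ(4β₁²) − φ(4β₁² + 4β₂²))/(φ(0) − φ(4β₂²)) is well-defined (denominator positive) and is at most (1/|μ|)∫₀^∞ e^{-4β₁² t} dμ(t). -/

import Mathlib

/-!
Since μ lives on [0, ∞), the functions t ↦ e^{-4β₁²t} and t ↦ e^{-4β₂²t} are both antitone, so
Chebyshev's integral inequality gives φ(4β₁²) φ(4β₂²) ≤ |μ| φ(4β₁² + 4β₂²). Clearing the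
denominators, this is exactly the claimed bound. The denominator
φ(0) − φ(4β₂²) = ∫ (1 − e^{-4β₂²t}) dμ is positive because its integrand is positive on (0, ∞),
which has positive mass.
-/

open MeasureTheory

/-- φ(z) = ∫₀^∞ e^{-tz} dμ(t). -/
noncomputable def phi (μ : Measure ℝ) (z : ℝ) : ℝ := ∫ t, Real.exp (-(t * z)) ∂μ

section Chebyshev

variable {α : Type*} [MeasurableSpace α] {μ : Measure α} [IsFiniteMeasure μ] {f g : α → ℝ}

lemma integral_sub_mul_sub (hf : Integrable f μ) (hg : Integrable g μ)
    (hfg : Integrable (fun x ↦ f x * g x) μ) (c d : ℝ) :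
    ∫ x, (f x - c) * (g x - d) ∂μ =
      (∫ x, f x * g x ∂μ) - d * (∫ x, f x ∂μ) - c * (∫ x, g x ∂μ) + μ.real Set.univ * (c * d) := by
  have expand : (fun x ↦ (f x - c) * (g x - d)) =
      fun x ↦ f x * g x - d * f x - c * g x + c * d := by
    ext x; ring
  rw [expand, integral_add (by fun_prop) (integrable_const _),
    integral_sub (by fun_prop) (by fun_prop), integral_sub hfg (by fun_prop), integral_const_mul,
    integral_const_mul, integral_const, smul_eq_mul]

theorem Monovary.integral_mul_integral_le (hmono : Monovary f g) (hf : Integrable f μ)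
    (hg : Integrable g μ) (hfg : Integrable (fun x ↦ f x * g x) μ) :
    (∫ x, f x ∂μ) * (∫ x, g x ∂μ) ≤ μ.real Set.univ * ∫ x, f x * g x ∂μ := by
  set F := ∫ x, f x ∂μ
  set G := ∫ x, g x ∂μ
  set I := ∫ x, f x * g x ∂μ
  have inner : ∀ s, 0 ≤ I - g s * F - f s * G + μ.real Set.univ * (f s * g s) := fun s ↦ by
    rw [← integral_sub_mul_sub hf hg hfg]
    exact integral_nonneg fun t ↦ monovary_iff_forall_mul_nonneg.1 hmono s t
  have outer : ∫ s, (I - g s * F - f s * G + μ.real Set.univ * (f s * g s)) ∂μ =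
      μ.real Set.univ * I - G * F - F * G + μ.real Set.univ * I := by
    rw [integral_add (by fun_prop) (by fun_prop), integral_sub (by fun_prop) (by fun_prop),
      integral_sub (integrable_const _) (by fun_prop), integral_const, smul_eq_mul,
      integral_mul_const, integral_mul_const, integral_const_mul]
  have := outer ▸ integral_nonneg fun s ↦ inner s
  linarith

end Chebyshev

section Laplace

variable {μ : Measure ℝ}

lemma phi_zero : phi μ 0 = μ.real Set.univ := by
  simp [phi]

lemma phi_nonneg (z : ℝ) : 0 ≤ phi μ z :=
  integral_nonneg fun _ ↦ (Real.exp_pos _).le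

variable [IsFiniteMeasure μ]

lemma integrable_exp_neg_mul_of_measure_Iio_eq_zero (hsupp : μ (Set.Iio 0) = 0) {z : ℝ}
    (hz : 0 ≤ z) : Integrable (fun t ↦ Real.exp (-(t * z))) μ := by
  refine (integrable_const 1).mono' (by fun_prop) ?_
  filter_upwards [measure_eq_zero_iff_ae_notMem.1 hsupp] with t ht
  rw [Real.norm_of_nonneg (Real.exp_pos _).le, Real.exp_le_one_iff, neg_nonpos]
  exact mul_nonneg (not_lt.1 ht) hz

lemma phi_mul_phi_le (hsupp : μ (Set.Iio 0) = 0) {a b : ℝ} (ha : 0 ≤ a) (hb : 0 ≤ b) :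
    phi μ a * phi μ b ≤ μ.real Set.univ * phi μ (a + b) := by
  have hanti : ∀ {z}, 0 ≤ z → Antitone fun t : ℝ ↦ Real.exp (-(t * z)) := fun hz _ _ hst ↦
    Real.exp_le_exp.2 (neg_le_neg (mul_le_mul_of_nonneg_right hst hz))
  have hprod : ∀ t, Real.exp (-(t * a)) * Real.exp (-(t * b)) = Real.exp (-(t * (a + b))) :=
    fun t ↦ by rw [← Real.exp_add]; ring_nf
  have hab := integrable_exp_neg_mul_of_measure_Iio_eq_zero hsupp (add_nonneg ha hb)
  simp only [phi, ← hprod] at hab ⊢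
  exact ((hanti ha).monovary (hanti hb)).integral_mul_integral_le
    (integrable_exp_neg_mul_of_measure_Iio_eq_zero hsupp ha)
    (integrable_exp_neg_mul_of_measure_Iio_eq_zero hsupp hb) hab

lemma phi_lt_phi_zero (hsupp : μ (Set.Iio 0) = 0) (hpos : 0 < μ (Set.Ioi 0)) {z : ℝ}
    (hz : 0 < z) : phi μ z < phi μ 0 := by
  have hint := integrable_exp_neg_mul_of_measure_Iio_eq_zero hsupp hz.le
  have hint_one_sub : Integrable (fun t ↦ 1 - Real.exp (-(t * z))) μ :=
    (integrable_const 1).sub hint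
  have hdiff : phi μ 0 - phi μ z = ∫ t, (1 - Real.exp (-(t * z))) ∂μ := by
    rw [integral_sub (integrable_const 1) hint, integral_const, smul_eq_mul, mul_one, phi_zero]
    rfl
  rw [← sub_pos, hdiff, integral_pos_iff_support_of_nonneg_ae _ hint_one_sub]
  · refine hpos.trans_le (measure_mono fun t (ht : 0 < t) ↦ ?_)
    exact sub_ne_zero.2 (Real.exp_lt_one_iff.2 (by nlinarith)).ne'
  · filter_upwards [measure_eq_zero_iff_ae_notMem.1 hsupp] with t ht
    exact sub_nonneg.2 (Real.exp_le_one_iff.2 (neg_nonpos.2 (mul_nonneg (not_lt.1 ht) hz.le)))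

end Laplace

theorem stmt13_general (μ : Measure ℝ) [IsFiniteMeasure μ] (hsupp : μ (Set.Iio 0) = 0)
    (hpos : 0 < μ (Set.Ioi 0)) (β₁ β₂ : ℝ) (hβ₂ : 0 < β₂) :
    0 < phi μ 0 - phi μ (4 * β₂ ^ 2) ∧
    (phi μ (4 * β₁ ^ 2) - phi μ (4 * β₁ ^ 2 + 4 * β₂ ^ 2)) / (phi μ 0 - phi μ (4 * β₂ ^ 2))
      ≤ (1 / (μ Set.univ).toReal) * ∫ t, Real.exp (-(4 * β₁ ^ 2 * t)) ∂μ := by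
  have hden := phi_lt_phi_zero hsupp hpos (by positivity : 0 < 4 * β₂ ^ 2)
  have hcorr := phi_mul_phi_le hsupp (by positivity : 0 ≤ 4 * β₁ ^ 2)
    (by positivity : 0 ≤ 4 * β₂ ^ 2)
  have hrhs : ∫ t, Real.exp (-(4 * β₁ ^ 2 * t)) ∂μ = phi μ (4 * β₁ ^ 2) := by
    simp only [phi, mul_comm]
  rw [phi_zero] at hden ⊢
  have hM : 0 < μ.real Set.univ := (phi_nonneg _).trans_lt hden
  refine ⟨sub_pos.2 hden, ?_⟩
  rw [hrhs, ← measureReal_def, div_le_iff₀ (sub_pos.2 hden), one_div_mul_eq_div,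
    div_mul_eq_mul_div, le_div_iff₀ hM]
  linarith

/-- with φ(z) = ∫₀^∞ e^{-tz} dμ(t), μ finite nonnegative with μ((0,∞)) > 0,
for β₁ ≥ 0 and β₂ > 0, the denominator φ(0) − φ(4β₂²) is positive and
(φ(4β₁²) − φ(4β₁² + 4β₂²))/(φ(0) − φ(4β₂²)) ≤ (1/|μ|)∫₀^∞ e^{-4β₁²t} dμ(t). -/
theorem stmt13 (μ : Measure ℝ) [IsFiniteMeasure μ] (hsupp : μ (Set.Iio 0) = 0)
    (hpos : 0 < μ (Set.Ioi 0)) (β₁ β₂ : ℝ) (hβ₁ : 0 ≤ β₁) (hβ₂ : 0 < β₂) :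
    0 < phi μ 0 - phi μ (4 * β₂ ^ 2) ∧
    (phi μ (4 * β₁ ^ 2) - phi μ (4 * β₁ ^ 2 + 4 * β₂ ^ 2)) / (phi μ 0 - phi μ (4 * β₂ ^ 2))
      ≤ (1 / (μ Set.univ).toReal) * ∫ t, Real.exp (-(4 * β₁ ^ 2 * t)) ∂μ :=
  stmt13_general μ hsupp hpos β₁ β₂ hβ₂
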